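/- arXiv:1610.08492 — 5 statements merged into one kernel-verified Lean document; each statement's English description precedes it below -/
import Mathlib

section
/- Let ξ, ζ be probability measures on ℕ with ξ ⪯ ζ (i.e., ξ([0,n]) ≥ ζ([0,n]) for all n). If a random variable κ with values in ℕ satisfies κ ⪯ ζ and κ ⪯_k ξ (i.e., P(κ ≤ n) ≥ ξ([0,n]) for all n ≤ k), then κ ⪯ ξ ⋄_{k+1} ζ. -/
open MeasureTheory

/-- Stochastic dominance: `ξ ⪯ ζ` iff `ξ([0,n]) ≥ ζ([0,n])` for all `n`. -/
def StochDom (ξ ζ : Measure ℕ) : Prop := ∀ n : ℕ, ζ (Set.Iic n) ≤ ξ (Set.Iic n)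

/-- Partial dominance `ξ ⪯_l ζ` : `ξ([0,n]) ≥ ζ([0,n])` for all `n ≤ l`. -/
def StochDomUpTo (l : ℕ) (ξ ζ : Measure ℕ) : Prop :=
  ∀ n ≤ l, ζ (Set.Iic n) ≤ ξ (Set.Iic n)

/-- `η` is the measure `ξ ⋄_k ζ`: it is a probability measure dominated by `ζ`, agreeing
with `ξ` on `[0,k-1]`, and for some `K ≥ k` its tails above `K` agree with those of `ζ`
while it vanishes on `{k,...,K-1}`. -/
def IsDiamond (ξ ζ : Measure ℕ) (k : ℕ) (η : Measure ℕ) : Prop :=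
  IsProbabilityMeasure η ∧ StochDom η ζ ∧
  (∀ n < k, η (Set.Iic n) = ξ (Set.Iic n)) ∧
  ∃ K ≥ k, (∀ n > K, η (Set.Ici n) = ζ (Set.Ici n)) ∧ η (Set.Ico k K) = 0

lemma iic_add_ici {μ : Measure ℕ} [IsProbabilityMeasure μ] (n : ℕ) :
    μ (Set.Iic n) + μ (Set.Ici (n + 1)) = 1 := by
  rw [← measure_union (by simp [Set.disjoint_left])
    (measurableSet_Ici)]
  have : Set.Iic n ∪ Set.Ici (n + 1) = Set.univ := by
    ext x; simp; omega
  rw [this, measure_univ]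

theorem diamond_mix {Ω : Type*} [MeasurableSpace Ω] (P : Measure Ω) [IsProbabilityMeasure P]
    (ξ ζ η : Measure ℕ) [IsProbabilityMeasure ξ] [IsProbabilityMeasure ζ]
    (k : ℕ) (hξζ : StochDom ξ ζ) (hη : IsDiamond ξ ζ (k + 1) η)
    (κ : Ω → ℕ) (hκ : Measurable κ)
    (hκζ : StochDom (Measure.map κ P) ζ)
    (hκξ : StochDomUpTo k (Measure.map κ P) ξ) :
    StochDom (Measure.map κ P) η := by
  obtain ⟨hprob, hηζ, hagree, K, hK, htail, hzero⟩ := hη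
  intro n
  rcases le_or_gt n k with hn | hn
  · calc η (Set.Iic n) = ξ (Set.Iic n) := hagree n (by omega)
      _ ≤ _ := hκξ n hn
  rcases lt_or_ge n K with hnK | hnK
  · have h1 : η (Set.Iic n) = η (Set.Iic k) := by
      have hsplit : Set.Iic n = Set.Iic k ∪ Set.Ioc k n := by
        ext x; simp; omega
      have h0 : η (Set.Ioc k n) = 0 :=
        measure_mono_null (by intro x; simp; omega) hzero
      rw [hsplit]
      refine le_antisymm ?_ (measure_mono Set.subset_union_left)
      calc η (Set.Iic k ∪ Set.Ioc k n) ≤ η (Set.Iic k) + η (Set.Ioc k n) := measure_union_le _ _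
        _ = η (Set.Iic k) := by rw [h0, add_zero]
    calc η (Set.Iic n) = ξ (Set.Iic k) := by rw [h1, hagree k (by omega)]
      _ ≤ Measure.map κ P (Set.Iic k) := hκξ k le_rfl
      _ ≤ Measure.map κ P (Set.Iic n) := measure_mono (Set.Iic_subset_Iic.2 hn.le)
  · haveI : IsProbabilityMeasure (Measure.map κ P) :=
      Measure.isProbabilityMeasure_map hκ.aemeasurable
    have h1 : η (Set.Iic n) = ζ (Set.Iic n) := by
      have htop : η (Set.Ici (n + 1)) ≠ ⊤ := (measure_ne_top _ _)
      have := (iic_add_ici (μ := η) n).trans (iic_add_ici (μ := ζ) n).symm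
      rw [htail (n + 1) (by omega)] at this
      exact (ENNReal.add_left_inj (measure_ne_top _ _)).1 this
    rw [h1]; exact hκζ n
end

section
/- Let ξ ⪯ ζ be probability measures on ℕ and k ∈ ℕ. Then the measures ξ ⋄_j ζ for j = 0,...,k form a decreasing chain in the stochastic order: ζ = ξ ⋄_0 ζ ⪰ ξ ⋄_1 ζ ⪰ ... ⪰ ξ ⋄_k ζ ⪰ ξ. -/
/-!
Write `F_μ(n) = μ([0,n])`. If `η = ξ ⋄_i ζ` with cut-off `K`, then `F_η = F_ξ` below `i`,
`F_η` stays at the value `F_ξ(i-1)` on `[i, K)` since `η` has no mass there, and `F_η = F_ζ`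
from `K` on. Hence `η ⪯ μ` for every `μ ⪯ ζ` that agrees with `ξ` below `i`: on `[i, K)` use
monotonicity of `F_μ`, from `K` on use `μ ⪯ ζ`. Both `μ = ξ` and `μ = ξ ⋄_j ζ` with `j ≥ i`
are of this kind, and for `i = 0` the choice `μ = ζ` gives `ζ ⪯ ξ ⋄_0 ζ ⪯ ζ`.
-/

open MeasureTheory

open Set

theorem StochDom.antisymm {μ ν : Measure ℕ} [IsFiniteMeasure μ] (hμν : StochDom μ ν)
    (hνμ : StochDom ν μ) : μ = ν :=
  Measure.ext_of_Iic μ ν fun n => le_antisymm (hνμ n) (hμν n)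

theorem measure_Iio_eq_of_forall_lt {μ ν : Measure ℕ} {i : ℕ}
    (h : ∀ n < i, μ (Iic n) = ν (Iic n)) : μ (Iio i) = ν (Iio i) := by
  cases i with
  | zero => simp
  | succ i => simpa only [Iio_add_one_eq_Iic] using h i i.lt_succ_self

theorem measure_Iic_eq_of_measure_Ici_eq {μ ν : Measure ℕ} [IsProbabilityMeasure μ]
    [IsProbabilityMeasure ν] {n : ℕ} (h : μ (Ici (n + 1)) = ν (Ici (n + 1))) :
    μ (Iic n) = ν (Iic n) := by
  rw [← Iio_add_one_eq_Iic, ← compl_Ici, prob_compl_eq_one_sub measurableSet_Ici,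
    prob_compl_eq_one_sub measurableSet_Ici, h]

theorem measure_Iic_le_Iio_of_measure_Ico_eq_zero {η : Measure ℕ} {i K n : ℕ} (hnK : n < K)
    (h0 : η (Ico i K) = 0) : η (Iic n) ≤ η (Iio i) :=
  calc η (Iic n) ≤ η (Iio i ∪ Ico i K) := measure_mono fun x (hx : x ≤ n) => by
        rcases lt_or_ge x i with hxi | hxi
        · exact Or.inl hxi
        · exact Or.inr ⟨hxi, hx.trans_lt hnK⟩
    _ ≤ η (Iio i) + η (Ico i K) := measure_union_le _ _
    _ = η (Iio i) := by rw [h0, add_zero]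

theorem IsDiamond.stochDom {ξ ζ η μ : Measure ℕ} [IsProbabilityMeasure ζ] {i : ℕ}
    (hη : IsDiamond ξ ζ i η) (hμζ : StochDom μ ζ) (hμξ : ∀ n < i, μ (Iic n) = ξ (Iic n)) :
    StochDom μ η := by
  obtain ⟨_, -, hηξ, K, -, htail, hgap⟩ := hη
  intro n
  rcases lt_or_ge n i with hni | hin
  · rw [hηξ n hni, hμξ n hni]
  rcases lt_or_ge n K with hnK | hKn
  · calc η (Iic n) ≤ η (Iio i) := measure_Iic_le_Iio_of_measure_Ico_eq_zero hnK hgap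
      _ = μ (Iio i) := by
        rw [measure_Iio_eq_of_forall_lt hηξ, measure_Iio_eq_of_forall_lt hμξ]
      _ ≤ μ (Iic n) := measure_mono fun x (hx : x < i) => hx.le.trans hin
  · rw [measure_Iic_eq_of_measure_Ici_eq (htail (n + 1) (by omega))]
    exact hμζ n

theorem diamond_chain_general (ξ ζ : Measure ℕ) [IsProbabilityMeasure ζ]
    (hξζ : StochDom ξ ζ) (k : ℕ) (η : ℕ → Measure ℕ)
    (hη : ∀ j ≤ k, IsDiamond ξ ζ j (η j)) :
    η 0 = ζ ∧ (∀ j < k, StochDom (η (j + 1)) (η j)) ∧ (∀ j ≤ k, StochDom ξ (η j)) := by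
  refine ⟨?_, fun j hj => ?_, fun j hj => (hη j hj).stochDom hξζ fun _ _ => rfl⟩
  · obtain ⟨_, hη₀ζ, -⟩ := hη 0 k.zero_le
    exact hη₀ζ.antisymm ((hη 0 k.zero_le).stochDom (fun _ => le_rfl) nofun)
  · obtain ⟨-, hζ, hξ, -⟩ := hη (j + 1) hj
    exact (hη j hj.le).stochDom hζ fun n hn => hξ n (by omega)

/-- The measures `ξ ⋄_j ζ`, `j = 0,...,k`, form a decreasing chain in the stochastic
order: `ζ = ξ ⋄_0 ζ ⪰ ξ ⋄_1 ζ ⪰ ... ⪰ ξ ⋄_k ζ ⪰ ξ`. -/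
theorem diamond_chain (ξ ζ : Measure ℕ) [IsProbabilityMeasure ξ] [IsProbabilityMeasure ζ]
    (hξζ : StochDom ξ ζ) (k : ℕ) (η : ℕ → Measure ℕ)
    (hη : ∀ j ≤ k, IsDiamond ξ ζ j (η j)) :
    η 0 = ζ ∧ (∀ j < k, StochDom (η (j + 1)) (η j)) ∧ (∀ j ≤ k, StochDom ξ (η j)) :=
  diamond_chain_general ξ ζ hξζ k η hη
end

section
/- Let ξ ⪯ ζ be probability measures on ℕ with finite means, and let k ∈ ℕ. Then the mean of ξ ⋄_k ζ satisfies E(ξ ⋄_k ζ) ≤ E(ξ) + E(ζ · 1_{[k,∞)}), i.e., the mean of ξ ⋄_k ζ is bounded by the mean of ξ plus the contribution of ζ above k. In particular, if ε := ζ([k,∞)) and ζ is supported in [0,B] then E(ξ ⋄_k ζ) ≤ E(ξ) + εB. -/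
/-!
By the tail-sum formula `E(μ) = ∑ᵢ μ(i, ∞)`. Below `k` the tails of `ξ ⋄_k ζ` are those of `ξ`,
and from `k` on they are dominated by those of `ζ`, whose tails beyond `k` sum to
`∑ₙ (n - k) ζ{n} ≤ E(ζ · 1_{[k,∞)})`. If `ζ` lives on `[0, B]`, the last sum is at most
`ζ[k, ∞) · B`.
-/

open MeasureTheory
open scoped ENNReal NNReal

/-- The mean of a measure on ℕ : `E(μ) = ∑ n, n·μ({n})`. -/
noncomputable def meanN (μ : Measure ℕ) : ℝ≥0∞ := ∑' n : ℕ, (n : ℝ≥0∞) * μ {n}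

lemma measure_Ioi_eq_one_sub_measure_Iic (μ : Measure ℕ) [IsProbabilityMeasure μ] (n : ℕ) :
    μ (Set.Ioi n) = 1 - μ (Set.Iic n) := by
  rw [← Set.compl_Iic, prob_compl_eq_one_sub measurableSet_Iic]

lemma tsum_ite_lt_const (m : ℕ) (c : ℝ≥0∞) : ∑' i : ℕ, (if i < m then c else 0) = m * c := by
  rw [tsum_eq_sum (s := Finset.range m) fun i hi => if_neg (by simpa using hi),
    Finset.sum_congr rfl fun i hi => if_pos (Finset.mem_range.mp hi)]
  simp

lemma tsum_measure_Ioi_add (μ : Measure ℕ) (k : ℕ) :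
    ∑' i, μ (Set.Ioi (i + k)) = ∑' n : ℕ, ((n - k : ℕ) : ℝ≥0∞) * μ {n} := by
  have h_tail (i : ℕ) : μ (Set.Ioi (i + k)) = ∑' n : ℕ, if i < n - k then μ {n} else 0 := by
    rw [← Measure.tsum_indicator_apply_singleton μ _ measurableSet_Ioi]
    congr 1 with n
    simp only [Set.indicator, Set.mem_Ioi]
    exact if_congr (by omega) rfl rfl
  simp_rw [h_tail]
  rw [ENNReal.tsum_comm]
  simp_rw [tsum_ite_lt_const]

lemma meanN_eq_tsum_measure_Ioi (μ : Measure ℕ) : meanN μ = ∑' i, μ (Set.Ioi i) := by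
  simpa [meanN] using (tsum_measure_Ioi_add μ 0).symm

lemma tsum_measure_Ioi_add_le (μ : Measure ℕ) (k : ℕ) :
    ∑' i, μ (Set.Ioi (i + k)) ≤
      ∑' n : ℕ, (Set.Ici k).indicator (fun n : ℕ => (n : ℝ≥0∞) * μ {n}) n := by
  rw [tsum_measure_Ioi_add]
  refine ENNReal.tsum_le_tsum fun n => ?_
  by_cases hn : k ≤ n
  · rw [Set.indicator_of_mem (Set.mem_Ici.mpr hn)]
    gcongr
    exact Nat.sub_le n k
  · simp [Nat.sub_eq_zero_of_le (Nat.le_of_not_le hn)]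

lemma tsum_indicator_Ici_mul_le_of_measure_Ioi_eq_zero (μ : Measure ℕ) (k B : ℕ)
    (hB : μ (Set.Ioi B) = 0) :
    ∑' n : ℕ, (Set.Ici k).indicator (fun n : ℕ => (n : ℝ≥0∞) * μ {n}) n ≤ μ (Set.Ici k) * B := by
  rw [← Measure.tsum_indicator_apply_singleton μ _ measurableSet_Ici, ← ENNReal.tsum_mul_right]
  refine ENNReal.tsum_le_tsum fun n => ?_
  by_cases hn : k ≤ n
  · simp only [Set.indicator_of_mem (Set.mem_Ici.mpr hn)]
    rcases le_or_gt n B with hnB | hBn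
    · rw [mul_comm]
      gcongr
    · simp [measure_mono_null (Set.singleton_subset_iff.mpr hBn) hB]
  · simp [Set.indicator_of_notMem (show n ∉ Set.Ici k from hn)]

lemma IsDiamond.meanN_le {ξ ζ η : Measure ℕ} [IsProbabilityMeasure ξ] [IsProbabilityMeasure ζ]
    {k : ℕ} (hη : IsDiamond ξ ζ k η) :
    meanN η ≤ meanN ξ +
      ∑' n : ℕ, (Set.Ici k).indicator (fun n : ℕ => (n : ℝ≥0∞) * ζ {n}) n := by
  obtain ⟨hprob, hdom, hagree, -⟩ := hη
  have h_below : ∑ i ∈ Finset.range k, η (Set.Ioi i) ≤ meanN ξ := by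
    rw [meanN_eq_tsum_measure_Ioi]
    calc ∑ i ∈ Finset.range k, η (Set.Ioi i)
        = ∑ i ∈ Finset.range k, ξ (Set.Ioi i) := by
          refine Finset.sum_congr rfl fun i hi => ?_
          rw [measure_Ioi_eq_one_sub_measure_Iic, measure_Ioi_eq_one_sub_measure_Iic,
            hagree i (Finset.mem_range.mp hi)]
      _ ≤ _ := ENNReal.sum_le_tsum _
  have h_above : ∑' i, η (Set.Ioi (i + k)) ≤ ∑' i, ζ (Set.Ioi (i + k)) := by
    refine ENNReal.tsum_le_tsum fun i => ?_
    rw [measure_Ioi_eq_one_sub_measure_Iic, measure_Ioi_eq_one_sub_measure_Iic]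
    exact tsub_le_tsub_left (hdom _) 1
  rw [meanN_eq_tsum_measure_Ioi, ← ENNReal.summable.sum_add_tsum_nat_add' (k := k)]
  exact add_le_add h_below (h_above.trans (tsum_measure_Ioi_add_le ζ k))

theorem diamond_mean_bound_general (ξ ζ η : Measure ℕ) [IsProbabilityMeasure ξ]
    [IsProbabilityMeasure ζ] (k : ℕ)
    (hη : IsDiamond ξ ζ k η) :
    meanN η ≤ meanN ξ + ∑' n : ℕ, Set.indicator (Set.Ici k) (fun n : ℕ => (n : ℝ≥0∞) * ζ {n}) n
    ∧ ∀ B : ℕ, ζ (Set.Ioi B) = 0 →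
        meanN η ≤ meanN ξ + ζ (Set.Ici k) * B := by
  refine ⟨hη.meanN_le, fun B hB => hη.meanN_le.trans ?_⟩
  gcongr
  exact tsum_indicator_Ici_mul_le_of_measure_Ioi_eq_zero ζ k B hB

/-- `E(ξ ⋄_k ζ) ≤ E(ξ) + E(ζ·1_{[k,∞)})`; in particular if `ζ([k,∞)) = ε` and `ζ` is
supported in `[0,B]` then `E(ξ ⋄_k ζ) ≤ E(ξ) + ε·B`. -/
theorem diamond_mean_bound (ξ ζ η : Measure ℕ) [IsProbabilityMeasure ξ]
    [IsProbabilityMeasure ζ] (hξζ : StochDom ξ ζ) (k : ℕ)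
    (hmξ : meanN ξ < ⊤) (hmζ : meanN ζ < ⊤)
    (hη : IsDiamond ξ ζ k η) :
    meanN η ≤ meanN ξ + ∑' n : ℕ, Set.indicator (Set.Ici k) (fun n : ℕ => (n : ℝ≥0∞) * ζ {n}) n
    ∧ ∀ B : ℕ, ζ (Set.Ioi B) = 0 →
        meanN η ≤ meanN ξ + ζ (Set.Ici k) * B :=
  diamond_mean_bound_general ξ ζ η k hη
end

section
/- Let (ξ_1,...,ξ_n) be exchangeable real-valued random variables for each n (i.e., their joint law P_n is invariant under permutations), and suppose the law of large numbers holds: for every bounded measurable f, the average (1/n)∑_{j=1}^n f(ξ_j) converges in probability to a deterministic value μ(f). Then for any two bounded measurable functions f_1, f_2, E[f_1(ξ_1) f_2(ξ_2)] → μ(f_1)·μ(f_2) as n → ∞; i.e., ξ_1 and ξ_2 are asymptotically independent. -/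
open MeasureTheory Filter Topology

/-!
By exchangeability, `E[f₁(ξᵢ) f₂(ξⱼ)]` only depends on whether `i = j`, so the product of the
empirical means `Y₁ = n⁻¹ ∑ f₁(ξⱼ)` and `Y₂ = n⁻¹ ∑ f₂(ξⱼ)` satisfies
`E[Y₁ Y₂] = E[f₁(ξ₁) f₂(ξ₂)] + O(1/n)`. By the law of large numbers `Y₁ Y₂ → μ(f₁) μ(f₂)` in
probability, and since `Y₁ Y₂` is uniformly bounded its expectation converges to the same limit.
-/

lemma abs_mul_le_mul_of_abs_le {a b C D : ℝ} (ha : |a| ≤ C) (hb : |b| ≤ D) : |a * b| ≤ C * D := by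
  rw [abs_mul]
  exact mul_le_mul ha hb (abs_nonneg b) ((abs_nonneg a).trans ha)

lemma exists_perm_apply_zero_apply_one {n i j : ℕ} (hi : i < n) (hj : j < n) (hij : i ≠ j) :
    ∃ σ : Equiv.Perm ℕ, σ 0 = i ∧ σ 1 = j ∧ ∀ k, n ≤ k → σ k = k := by
  set l := Equiv.swap 0 i j with hl
  have hl_lt : l < n := by rw [hl, Equiv.swap_apply_def]; split_ifs <;> omega
  have hl_ne : l ≠ 0 := by rw [hl, Equiv.swap_apply_def]; split_ifs <;> omega
  refine ⟨Equiv.swap 0 i * Equiv.swap 1 l, ?_, ?_, fun k hk => ?_⟩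
  · simp [Equiv.swap_apply_of_ne_of_ne zero_ne_one hl_ne.symm]
  · simp [hl]
  · simp [Equiv.swap_apply_of_ne_of_ne (show k ≠ 1 by omega) (show k ≠ l by omega),
      Equiv.swap_apply_of_ne_of_ne (show k ≠ 0 by omega) (show k ≠ i by omega)]

section

variable {α Ω : Type*}

noncomputable def empiricalMean (f : α → ℝ) (n : ℕ) (x : ℕ → α) : ℝ :=
  (n : ℝ)⁻¹ * ∑ j ∈ Finset.range n, f (x j)

lemma abs_empiricalMean_le {f : α → ℝ} {C : ℝ} (hC : ∀ a, |f a| ≤ C) (n : ℕ) (x : ℕ → α) :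
    |empiricalMean f n x| ≤ C := by
  have hC₀ : 0 ≤ C := (abs_nonneg _).trans (hC (x 0))
  rcases n.eq_zero_or_pos with rfl | hn
  · simpa [empiricalMean] using hC₀
  rw [empiricalMean, abs_mul, abs_inv, Nat.abs_cast, inv_mul_le_iff₀ (by positivity)]
  calc |∑ j ∈ Finset.range n, f (x j)| ≤ ∑ j ∈ Finset.range n, |f (x j)| :=
        Finset.abs_sum_le_sum_abs _ _
    _ ≤ n * C := by simpa using Finset.sum_le_card_nsmul (Finset.range n) _ _ fun j _ => hC (x j)

variable [MeasurableSpace α] [MeasurableSpace Ω]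

def IsExchangeableUpTo (n : ℕ) (P : Measure (ℕ → α)) : Prop :=
  ∀ σ : Equiv.Perm ℕ, (∀ i, n ≤ i → σ i = i) → P.map (fun x => x ∘ σ) = P

def TendstoInProbability (P : ℕ → Measure Ω) (Y : ℕ → Ω → ℝ) (m : ℝ) : Prop :=
  ∀ ε : ℝ, 0 < ε → Tendsto (fun n => P n {x | ε ≤ |Y n x - m|}) atTop (𝓝 0)

lemma measurable_empiricalMean {f : α → ℝ} (hf : Measurable f) (n : ℕ) :
    Measurable (empiricalMean f n) := by
  unfold empiricalMean
  fun_prop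

lemma integrable_comp_apply_mul_comp_apply {P : Measure (ℕ → α)} [IsFiniteMeasure P]
    {f₁ f₂ : α → ℝ} (hf₁ : Measurable f₁) (hf₂ : Measurable f₂) {C₁ C₂ : ℝ}
    (hC₁ : ∀ a, |f₁ a| ≤ C₁) (hC₂ : ∀ a, |f₂ a| ≤ C₂) (i j : ℕ) :
    Integrable (fun x => f₁ (x i) * f₂ (x j)) P :=
  .of_bound (by fun_prop) (C₁ * C₂)
    (ae_of_all _ fun x =>
      (abs_mul_le_mul_of_abs_le (hC₁ (x i)) (hC₂ (x j)) : ‖f₁ (x i) * f₂ (x j)‖ ≤ C₁ * C₂))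

lemma abs_integral_comp_apply_mul_comp_apply_le {P : Measure (ℕ → α)} [IsProbabilityMeasure P]
    {f₁ f₂ : α → ℝ} {C₁ C₂ : ℝ} (hC₁ : ∀ a, |f₁ a| ≤ C₁) (hC₂ : ∀ a, |f₂ a| ≤ C₂) (i j : ℕ) :
    |∫ x, f₁ (x i) * f₂ (x j) ∂P| ≤ C₁ * C₂ := by
  simpa using norm_integral_le_of_norm_le_const (μ := P) (f := fun x => f₁ (x i) * f₂ (x j))
    (ae_of_all _ fun x =>
      (abs_mul_le_mul_of_abs_le (hC₁ (x i)) (hC₂ (x j)) : ‖f₁ (x i) * f₂ (x j)‖ ≤ C₁ * C₂))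

namespace IsExchangeableUpTo

variable {n : ℕ} {P : Measure (ℕ → α)}

lemma integral_comp_perm (hP : IsExchangeableUpTo n P) {g : (ℕ → α) → ℝ}
    (hg : AEStronglyMeasurable g P) {σ : Equiv.Perm ℕ} (hσ : ∀ i, n ≤ i → σ i = i) :
    ∫ x, g (x ∘ σ) ∂P = ∫ x, g x ∂P := by
  have hσ_meas : Measurable fun x : ℕ → α => x ∘ σ :=
    measurable_pi_lambda _ fun k => measurable_pi_apply _
  rw [← integral_map hσ_meas.aemeasurable (by rwa [hP σ hσ]), hP σ hσ]

lemma integral_comp_apply (hP : IsExchangeableUpTo n P) {g : α → ℝ} (hg : Measurable g)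
    {i : ℕ} (hi : i < n) : ∫ x, g (x i) ∂P = ∫ x, g (x 0) ∂P := by
  simpa using hP.integral_comp_perm (g := fun x => g (x 0))
    (hg.comp (measurable_pi_apply 0)).aestronglyMeasurable
    (σ := Equiv.swap 0 i) fun k hk => Equiv.swap_apply_of_ne_of_ne (by omega) (by omega)

lemma integral_comp_apply_apply (hP : IsExchangeableUpTo n P) {g : α × α → ℝ}
    (hg : Measurable g) {i j : ℕ} (hi : i < n) (hj : j < n) (hij : i ≠ j) :
    ∫ x, g (x i, x j) ∂P = ∫ x, g (x 0, x 1) ∂P := by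
  obtain ⟨σ, hσ₀, hσ₁, hσ⟩ := exists_perm_apply_zero_apply_one hi hj hij
  simpa [hσ₀, hσ₁] using hP.integral_comp_perm (g := fun x => g (x 0, x 1))
    (hg.comp (by fun_prop)).aestronglyMeasurable hσ

lemma integral_sum_mul_sum [IsFiniteMeasure P] (hP : IsExchangeableUpTo n P) {f₁ f₂ : α → ℝ}
    (hf₁ : Measurable f₁) (hf₂ : Measurable f₂) {C₁ C₂ : ℝ}
    (hC₁ : ∀ a, |f₁ a| ≤ C₁) (hC₂ : ∀ a, |f₂ a| ≤ C₂) :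
    ∫ x, (∑ i ∈ Finset.range n, f₁ (x i)) * (∑ j ∈ Finset.range n, f₂ (x j)) ∂P
      = ((n : ℝ) ^ 2 - n) * ∫ x, f₁ (x 0) * f₂ (x 1) ∂P + n * ∫ x, f₁ (x 0) * f₂ (x 0) ∂P := by
  set A := ∫ x, f₁ (x 0) * f₂ (x 1) ∂P
  set B := ∫ x, f₁ (x 0) * f₂ (x 0) ∂P
  have hprod_int := integrable_comp_apply_mul_comp_apply (P := P) hf₁ hf₂ hC₁ hC₂
  have hentry : ∀ i ∈ Finset.range n, ∀ j ∈ Finset.range n,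
      ∫ x, f₁ (x i) * f₂ (x j) ∂P = A + if i = j then B - A else 0 := by
    intro i hi j hj
    rw [Finset.mem_range] at hi hj
    split_ifs with hij
    · subst hij
      rw [add_sub_cancel]
      exact hP.integral_comp_apply (g := fun a => f₁ a * f₂ a) (by fun_prop) hi
    · rw [add_zero]
      exact hP.integral_comp_apply_apply (g := fun p => f₁ p.1 * f₂ p.2) (by fun_prop) hi hj hij
  calc ∫ x, (∑ i ∈ Finset.range n, f₁ (x i)) * (∑ j ∈ Finset.range n, f₂ (x j)) ∂P
      = ∑ i ∈ Finset.range n, ∑ j ∈ Finset.range n, ∫ x, f₁ (x i) * f₂ (x j) ∂P := by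
        simp_rw [Finset.sum_mul_sum]
        rw [integral_finsetSum _ fun i _ => integrable_finsetSum _ fun j _ => hprod_int i j]
        exact Finset.sum_congr rfl fun i _ => integral_finsetSum _ fun j _ => hprod_int i j
    _ = ∑ i ∈ Finset.range n, ∑ j ∈ Finset.range n, (A + if i = j then B - A else 0) :=
        Finset.sum_congr rfl fun i hi => Finset.sum_congr rfl fun j hj => hentry i hi j hj
    _ = ∑ i ∈ Finset.range n, (n * A + (B - A)) := Finset.sum_congr rfl fun i hi => by
        rw [Finset.sum_add_distrib, Finset.sum_ite_eq, if_pos hi]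
        simp
    _ = ((n : ℝ) ^ 2 - n) * A + n * B := by
        simp only [Finset.sum_const, Finset.card_range, smul_add, nsmul_eq_mul]
        ring

lemma abs_integral_sub_integral_empiricalMean_mul_le [IsProbabilityMeasure P]
    (hP : IsExchangeableUpTo n P) (hn : 0 < n) {f₁ f₂ : α → ℝ}
    (hf₁ : Measurable f₁) (hf₂ : Measurable f₂) {C₁ C₂ : ℝ}
    (hC₁ : ∀ a, |f₁ a| ≤ C₁) (hC₂ : ∀ a, |f₂ a| ≤ C₂) :
    |∫ x, f₁ (x 0) * f₂ (x 1) ∂P - ∫ x, empiricalMean f₁ n x * empiricalMean f₂ n x ∂P|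
      ≤ 2 * (C₁ * C₂) / n := by
  set A := ∫ x, f₁ (x 0) * f₂ (x 1) ∂P
  set B := ∫ x, f₁ (x 0) * f₂ (x 0) ∂P
  have hA : |A| ≤ C₁ * C₂ := abs_integral_comp_apply_mul_comp_apply_le hC₁ hC₂ 0 1
  have hB : |B| ≤ C₁ * C₂ := abs_integral_comp_apply_mul_comp_apply_le hC₁ hC₂ 0 0
  have hn' : (0 : ℝ) < n := by exact_mod_cast hn
  have hmean : ∫ x, empiricalMean f₁ n x * empiricalMean f₂ n x ∂P = A + (B - A) / n := by
    simp_rw [empiricalMean, mul_mul_mul_comm, integral_const_mul,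
      hP.integral_sum_mul_sum hf₁ hf₂ hC₁ hC₂]
    field_simp
    ring
  calc |A - ∫ x, empiricalMean f₁ n x * empiricalMean f₂ n x ∂P| = |A - B| / n := by
        rw [hmean, show A - (A + (B - A) / n) = (A - B) / n by ring, abs_div, Nat.abs_cast]
    _ ≤ 2 * (C₁ * C₂) / n := by
        gcongr
        linarith [abs_sub A B]

end IsExchangeableUpTo

lemma TendstoInProbability.mul {P : ℕ → Measure Ω} {Y₁ Y₂ : ℕ → Ω → ℝ} {m₁ m₂ C : ℝ}
    (h₁ : TendstoInProbability P Y₁ m₁) (h₂ : TendstoInProbability P Y₂ m₂)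
    (hC : ∀ n x, |Y₁ n x| ≤ C) :
    TendstoInProbability P (fun n x => Y₁ n x * Y₂ n x) (m₁ * m₂) := by
  intro ε hε
  set K := |C| + |m₂| + 1
  have hK : 0 < K := by positivity
  have hδ : 0 < ε / K := div_pos hε hK
  have hsub : ∀ n, {x | ε ≤ |Y₁ n x * Y₂ n x - m₁ * m₂|}
      ⊆ {x | ε / K ≤ |Y₂ n x - m₂|} ∪ {x | ε / K ≤ |Y₁ n x - m₁|} := by
    intro n x hx
    by_contra hx'
    simp only [Set.mem_union, Set.mem_ofPred_eq, not_or, not_le] at hx hx'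
    have hY₁ : |Y₁ n x| ≤ |C| := (hC n x).trans (le_abs_self C)
    have : |Y₁ n x * Y₂ n x - m₁ * m₂| < ε := calc
      _ = |Y₁ n x * (Y₂ n x - m₂) + (Y₁ n x - m₁) * m₂| := by ring_nf
      _ ≤ |Y₁ n x| * |Y₂ n x - m₂| + |Y₁ n x - m₁| * |m₂| := by
          rw [← abs_mul, ← abs_mul]; exact abs_add_le _ _
      _ ≤ |C| * (ε / K) + ε / K * |m₂| := by gcongr; exacts [hx'.1.le, hx'.2.le]
      _ < K * (ε / K) := by simp only [K]; nlinarith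
      _ = ε := mul_div_cancel₀ _ hK.ne'
    exact this.not_ge hx
  refine tendsto_of_tendsto_of_tendsto_of_le_of_le tendsto_const_nhds
    (by simpa using (h₂ _ hδ).add (h₁ _ hδ)) (fun _ => zero_le)
    fun n => (measure_mono (hsub n)).trans (measure_union_le _ _)

lemma abs_integral_sub_le_add_measureReal {P : Measure Ω} [IsProbabilityMeasure P] {Y : Ω → ℝ}
    (hY : Measurable Y) {C : ℝ} (hC : ∀ x, |Y x| ≤ C) (m : ℝ) {ε : ℝ} (hε : 0 ≤ ε) :
    |∫ x, Y x ∂P - m| ≤ ε + (C + |m|) * P.real {x | ε ≤ |Y x - m|} := by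
  set S := {x | ε ≤ |Y x - m|}
  have hS : MeasurableSet S := measurableSet_le measurable_const (hY.sub_const m).abs
  have hY_int : Integrable Y P := .of_bound hY.aestronglyMeasurable C (ae_of_all _ hC)
  have hind : Integrable (S.indicator fun _ => C + |m|) P := (integrable_const _).indicator hS
  have hbound : ∀ x, |Y x - m| ≤ ε + S.indicator (fun _ => C + |m|) x := by
    intro x
    by_cases hx : x ∈ S
    · rw [Set.indicator_of_mem hx]
      linarith [abs_sub (Y x) m, hC x]
    · rw [Set.indicator_of_notMem hx]
      simp only [S, Set.mem_ofPred_eq, not_le] at hx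
      linarith
  calc |∫ x, Y x ∂P - m| = ‖∫ x, (Y x - m) ∂P‖ := by
        rw [integral_sub hY_int (integrable_const m), integral_const]
        simp
    _ ≤ ∫ x, (ε + S.indicator (fun _ => C + |m|) x) ∂P :=
        norm_integral_le_of_norm_le ((integrable_const ε).add hind) (ae_of_all _ hbound)
    _ = ε + (C + |m|) * P.real S := by
        rw [integral_add (integrable_const ε) hind, integral_const, integral_indicator_const _ hS]
        simp [mul_comm]

lemma TendstoInProbability.tendsto_integral {P : ℕ → Measure Ω}
    [∀ n, IsProbabilityMeasure (P n)] {Y : ℕ → Ω → ℝ} {m C : ℝ}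
    (h : TendstoInProbability P Y m) (hY : ∀ n, Measurable (Y n)) (hC : ∀ n x, |Y n x| ≤ C) :
    Tendsto (fun n => ∫ x, Y n x ∂P n) atTop (𝓝 m) := by
  rw [Metric.tendsto_nhds]
  intro δ hδ
  have hq : Tendsto (fun n => (C + |m|) * (P n).real {x | δ / 2 ≤ |Y n x - m|}) atTop (𝓝 0) := by
    simpa [measureReal_def] using
      ((ENNReal.tendsto_toReal ENNReal.zero_ne_top).comp (h _ (half_pos hδ))).const_mul (C + |m|)
  filter_upwards [hq.eventually (gt_mem_nhds (half_pos hδ))] with n hn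
  rw [Real.dist_eq]
  linarith [abs_integral_sub_le_add_measureReal (P := P n) (hY n) (hC n) m (half_pos hδ).le]

end

/-- For exchangeable random variables satisfying the law of large numbers,
`E[f₁(ξ₁) f₂(ξ₂)] → μ(f₁)·μ(f₂)`: the first two coordinates are asymptotically
independent.  Here `P n` is the joint law of `(ξ₁,...,ξ_n)`, realized as a measure on
sequences whose coordinates beyond `n` are irrelevant. -/
theorem asymptotic_independence_two
    (P : ℕ → Measure (ℕ → ℝ)) (hP : ∀ n, IsProbabilityMeasure (P n))
    (hexch : ∀ n, ∀ σ : Equiv.Perm ℕ, (∀ i, n ≤ i → σ i = i) →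
      Measure.map (fun x => x ∘ σ) (P n) = P n)
    (μ : (ℝ → ℝ) → ℝ)
    (hLLN : ∀ f : ℝ → ℝ, Measurable f → (∃ C, ∀ x, |f x| ≤ C) → ∀ ε : ℝ, 0 < ε →
      Tendsto (fun n => P n {x | ε ≤ |(n : ℝ)⁻¹ * ∑ j ∈ Finset.range n, f (x j) - μ f|})
        atTop (nhds 0))
    (f₁ f₂ : ℝ → ℝ) (hf₁ : Measurable f₁) (hf₂ : Measurable f₂)
    (hb₁ : ∃ C, ∀ x, |f₁ x| ≤ C) (hb₂ : ∃ C, ∀ x, |f₂ x| ≤ C) :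
    Tendsto (fun n => ∫ x, f₁ (x 0) * f₂ (x 1) ∂ P n) atTop (nhds (μ f₁ * μ f₂)) := by
  obtain ⟨C₁, hC₁⟩ := hb₁
  obtain ⟨C₂, hC₂⟩ := hb₂
  have hLLN₁ : TendstoInProbability P (empiricalMean f₁) (μ f₁) := hLLN f₁ hf₁ ⟨C₁, hC₁⟩
  have hLLN₂ : TendstoInProbability P (empiricalMean f₂) (μ f₂) := hLLN f₂ hf₂ ⟨C₂, hC₂⟩
  have hmeans : Tendsto (fun n => ∫ x, empiricalMean f₁ n x * empiricalMean f₂ n x ∂P n)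
      atTop (𝓝 (μ f₁ * μ f₂)) :=
    (hLLN₁.mul hLLN₂ (abs_empiricalMean_le hC₁)).tendsto_integral
      (fun n => (measurable_empiricalMean hf₁ n).mul (measurable_empiricalMean hf₂ n))
      fun n x => abs_mul_le_mul_of_abs_le (abs_empiricalMean_le hC₁ n x)
        (abs_empiricalMean_le hC₂ n x)
  have hgap : Tendsto (fun n => ∫ x, f₁ (x 0) * f₂ (x 1) ∂P n
      - ∫ x, empiricalMean f₁ n x * empiricalMean f₂ n x ∂P n) atTop (𝓝 0) :=
    squeeze_zero_norm' ((eventually_gt_atTop 0).mono fun n hn =>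
        IsExchangeableUpTo.abs_integral_sub_integral_empiricalMean_mul_le (hexch n) hn
          hf₁ hf₂ hC₁ hC₂)
      (tendsto_const_div_atTop_nhds_zero_nat _)
  simpa using hgap.add hmeans
end

section
/- Let k ≥ 1 be fixed. For each tuple (n_1,...,n_k), let random variables (ξ_j^i)_{1≤j≤n_i, 1≤i≤k} have joint distribution P_{n_1,...,n_k} invariant under the product group S_{n_1} × ... × S_{n_k} (the i-th factor permuting ξ_1^i,...,ξ_{n_i}^i). Suppose for each i the LLN holds: for every bounded measurable f, (1/n_i)∑_{j=1}^{n_i} f(ξ_j^i) → μ^i(f) in probability as n_i → ∞, with μ^i nonrandom. Then for any m_1,...,m_k and bounded measurable functions f_j^i (1 ≤ j ≤ m_i), E[∏_{i=1}^k ∏_{j=1}^{m_i} f_j^i(ξ_j^i)] → ∏_{i=1}^k ∏_{j=1}^{m_i} μ^i(f_j^i) as all n_i → ∞. -/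
/-!
Replacing one factor `f (x i b)` (with `b < m i`) by the block mean
`(n i)⁻¹ ∑_{l < n i} f (x i l)` changes the expectation of the product by `O(m i / n i)`: the
transposition of `b` and any `l ≥ m i` preserves the law and every other factor (each one
involves only block means or coordinates `< m i`), so all but `m i` of the `n i` terms of the
mean contribute exactly the original expectation. Replacing the factors one at a time, the
expectation of the product is asymptotically that of the product of block means. By the law of
large numbers each block mean converges in probability to the constant `μ i f`; being uniformly
bounded, their product converges in `L¹` to `∏ μ i f`.
-/

open MeasureTheory Filter
open scoped Topology

theorem Finset.abs_prod_le_pow_card {β : Type*} (s : Finset β) (g : β → ℝ) {C : ℝ}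
    (h : ∀ p ∈ s, |g p| ≤ C) : |∏ p ∈ s, g p| ≤ C ^ s.card := by
  rw [Finset.abs_prod, ← Finset.prod_const]
  exact Finset.prod_le_prod (fun _ _ => abs_nonneg _) h

section ConvergenceToConstant

variable {ι Ω : Type*} [MeasurableSpace Ω] {l : Filter ι} {P : ι → Measure Ω}
  [∀ n, IsProbabilityMeasure (P n)]

theorem integral_abs_le_add_mul_measureReal {Q : Measure Ω} [IsProbabilityMeasure Q]
    {Y : Ω → ℝ} (hY : Measurable Y) {K : ℝ} (hYK : ∀ x, |Y x| ≤ K) {ε : ℝ} (hε : 0 ≤ ε) :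
    ∫ x, |Y x| ∂Q ≤ ε + K * Q.real {x | ε ≤ |Y x|} := by
  set A := {x | ε ≤ |Y x|}
  have hA : MeasurableSet A := measurableSet_le measurable_const hY.abs
  have hpt : ∀ x, |Y x| ≤ ε + K * A.indicator 1 x := by
    intro x
    by_cases hx : x ∈ A
    · simpa [hx] using (hYK x).trans (le_add_of_nonneg_left hε)
    · simp only [hx, not_false_eq_true, Set.indicator_of_notMem, mul_zero, add_zero]
      exact (not_le.mp hx).le
  have hind : Integrable (A.indicator (1 : Ω → ℝ)) Q := (integrable_const 1).indicator hA
  calc ∫ x, |Y x| ∂Q ≤ ∫ x, ε + K * A.indicator 1 x ∂Q :=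
        integral_mono_of_nonneg (ae_of_all _ fun _ => abs_nonneg _)
          ((integrable_const ε).add (hind.const_mul K)) (ae_of_all _ hpt)
    _ = ε + K * Q.real A := by
        rw [integral_add (integrable_const ε) (hind.const_mul K), integral_const_mul,
          integral_indicator_one hA]
        simp

theorem tendsto_integral_abs_sub_of_tendsto_measure {X : ι → Ω → ℝ} {c C : ℝ}
    (hX : ∀ n, Measurable (X n)) (hXC : ∀ n x, |X n x| ≤ C)
    (hXc : ∀ ε, 0 < ε → Tendsto (fun n => P n {x | ε ≤ |X n x - c|}) l (𝓝 0)) :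
    Tendsto (fun n => ∫ x, |X n x - c| ∂P n) l (𝓝 0) := by
  have hbound : ∀ n x, |X n x - c| ≤ C + |c| := fun n x =>
    (abs_sub _ _).trans (add_le_add_left (hXC n x) _)
  refine tendsto_order.2 ⟨fun a ha => Eventually.of_forall fun n =>
    ha.trans_le (integral_nonneg fun _ => abs_nonneg _), fun δ hδ => ?_⟩
  have hsmall :
      Tendsto (fun n => (C + |c|) * (P n).real {x | δ / 2 ≤ |X n x - c|}) l (𝓝 0) := by
    simpa [measureReal_def] using ((ENNReal.tendsto_toReal ENNReal.zero_ne_top).comp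
      (hXc (δ / 2) (half_pos hδ))).const_mul (C + |c|)
  filter_upwards [hsmall.eventually_lt_const (half_pos hδ)] with n hn
  calc ∫ x, |X n x - c| ∂P n ≤ δ / 2 + (C + |c|) * (P n).real {x | δ / 2 ≤ |X n x - c|} :=
        integral_abs_le_add_mul_measureReal ((hX n).sub measurable_const) (hbound n)
          (half_pos hδ).le
    _ < δ := by linarith

theorem tendsto_integral_abs_mul_sub_mul {X Y : ι → Ω → ℝ} {a b C D : ℝ}
    (hX : ∀ n, Measurable (X n)) (hXC : ∀ n x, |X n x| ≤ C)
    (hY : ∀ n, Measurable (Y n)) (hYD : ∀ n x, |Y n x| ≤ D)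
    (hXa : Tendsto (fun n => ∫ x, |X n x - a| ∂P n) l (𝓝 0))
    (hYb : Tendsto (fun n => ∫ x, |Y n x - b| ∂P n) l (𝓝 0)) :
    Tendsto (fun n => ∫ x, |X n x * Y n x - a * b| ∂P n) l (𝓝 0) := by
  have hintX : ∀ n, Integrable (fun x => |X n x - a|) (P n) := fun n =>
    Integrable.of_bound ((hX n).sub measurable_const).abs.aestronglyMeasurable (C + |a|)
      (ae_of_all _ fun x => by simpa using (abs_sub _ _).trans (add_le_add_left (hXC n x) _))
  have hintY : ∀ n, Integrable (fun x => |Y n x - b|) (P n) := fun n =>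
    Integrable.of_bound ((hY n).sub measurable_const).abs.aestronglyMeasurable (D + |b|)
      (ae_of_all _ fun x => by simpa using (abs_sub _ _).trans (add_le_add_left (hYD n x) _))
  have hpt : ∀ n x, |X n x * Y n x - a * b| ≤ D * |X n x - a| + |a| * |Y n x - b| := by
    intro n x
    calc |X n x * Y n x - a * b| = |(X n x - a) * Y n x + a * (Y n x - b)| := by ring_nf
      _ ≤ |X n x - a| * D + |a| * |Y n x - b| := by
        rw [← abs_mul a]
        exact (abs_add_le _ _).trans (add_le_add_left (by
          rw [abs_mul]; exact mul_le_mul_of_nonneg_left (hYD n x) (abs_nonneg _)) _)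
      _ = D * |X n x - a| + |a| * |Y n x - b| := by ring
  have hlim : Tendsto (fun n => D * ∫ x, |X n x - a| ∂P n + |a| * ∫ x, |Y n x - b| ∂P n) l
      (𝓝 0) := by
    simpa using (hXa.const_mul D).add (hYb.const_mul |a|)
  refine squeeze_zero (fun n => integral_nonneg fun _ => abs_nonneg _) (fun n => ?_) hlim
  rw [← integral_const_mul, ← integral_const_mul, ← integral_add ((hintX n).const_mul _)
    ((hintY n).const_mul _)]
  exact integral_mono_of_nonneg (ae_of_all _ fun _ => abs_nonneg _)
    (((hintX n).const_mul _).add ((hintY n).const_mul _)) (ae_of_all _ (hpt n))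

theorem tendsto_integral_abs_prod_sub_prod {β : Type*} [DecidableEq β] (S : Finset β)
    {X : β → ι → Ω → ℝ} {c : β → ℝ} {C : ℝ}
    (hX : ∀ p ∈ S, ∀ n, Measurable (X p n)) (hXC : ∀ p ∈ S, ∀ n x, |X p n x| ≤ C)
    (hXc : ∀ p ∈ S, Tendsto (fun n => ∫ x, |X p n x - c p| ∂P n) l (𝓝 0)) :
    Tendsto (fun n => ∫ x, |∏ p ∈ S, X p n x - ∏ p ∈ S, c p| ∂P n) l (𝓝 0) := by
  induction S using Finset.induction_on with
  | empty => simpa using tendsto_const_nhds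
  | insert q S hq ih =>
    simp only [Finset.forall_mem_insert] at hX hXC hXc
    simp only [Finset.prod_insert hq]
    exact tendsto_integral_abs_mul_sub_mul hX.1 hXC.1
      (fun n => Finset.measurable_prod _ fun p hp => hX.2 p hp n)
      (fun n x => Finset.abs_prod_le_pow_card _ _ fun p hp => hXC.2 p hp n x)
      hXc.1 (ih hX.2 hXC.2 hXc.2)

theorem tendsto_integral_of_tendsto_integral_abs_sub {X : ι → Ω → ℝ} {c : ℝ}
    (hX : ∀ n, Integrable (X n) (P n))
    (hXc : Tendsto (fun n => ∫ x, |X n x - c| ∂P n) l (𝓝 0)) :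
    Tendsto (fun n => ∫ x, X n x ∂P n) l (𝓝 c) := by
  rw [tendsto_iff_norm_sub_tendsto_zero]
  refine squeeze_zero (fun _ => norm_nonneg _) (fun n => ?_) hXc
  have : ∫ x, X n x ∂P n - c = ∫ x, X n x - c ∂P n := by
    rw [integral_sub (hX n) (integrable_const c)]
    simp
  rw [this]
  exact norm_integral_le_integral_norm _

theorem tendsto_integral_prod_of_tendsto_measure {β : Type*} [DecidableEq β] (S : Finset β)
    {X : β → ι → Ω → ℝ} {c : β → ℝ} {C : ℝ}
    (hX : ∀ p ∈ S, ∀ n, Measurable (X p n)) (hXC : ∀ p ∈ S, ∀ n x, |X p n x| ≤ C)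
    (hXc : ∀ p ∈ S, ∀ ε, 0 < ε →
      Tendsto (fun n => P n {x | ε ≤ |X p n x - c p|}) l (𝓝 0)) :
    Tendsto (fun n => ∫ x, ∏ p ∈ S, X p n x ∂P n) l (𝓝 (∏ p ∈ S, c p)) :=
  tendsto_integral_of_tendsto_integral_abs_sub
    (fun n => Integrable.of_bound
      (Finset.measurable_prod _ fun p hp => hX p hp n).aestronglyMeasurable (C ^ S.card)
      (ae_of_all _ fun x => Finset.abs_prod_le_pow_card _ _ fun p hp => hXC p hp n x))
    (tendsto_integral_abs_prod_sub_prod S hX hXC fun p hp =>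
      tendsto_integral_abs_sub_of_tendsto_measure (hX p hp) (hXC p hp) (hXc p hp))

end ConvergenceToConstant

section BlockExchangeable

variable {κ α : Type*}

noncomputable def blockMean (N : ℕ) (i : κ) (φ : α → ℝ) (x : κ → ℕ → α) : ℝ :=
  (N : ℝ)⁻¹ * ∑ l ∈ Finset.range N, φ (x i l)

theorem measurable_blockMean [MeasurableSpace α] {φ : α → ℝ} (hφ : Measurable φ) (N : ℕ)
    (i : κ) : Measurable (blockMean N i φ) :=
  (Finset.measurable_sum _ fun l _ =>
    hφ.comp ((measurable_pi_apply l).comp (measurable_pi_apply i))).const_mul _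

theorem abs_blockMean_le {φ : α → ℝ} {C : ℝ} (hC : 0 ≤ C) (hφC : ∀ a, |φ a| ≤ C) (N : ℕ)
    (i : κ) (x : κ → ℕ → α) : |blockMean N i φ x| ≤ C := by
  rcases Nat.eq_zero_or_pos N with rfl | hN
  · simpa [blockMean] using hC
  have hsum : |∑ l ∈ Finset.range N, φ (x i l)| ≤ N * C := by
    simpa using (Finset.abs_sum_le_sum_abs _ _).trans
      (Finset.sum_le_card_nsmul (Finset.range N) _ C fun l _ => hφC (x i l))
  rw [blockMean, abs_mul, abs_inv, Nat.abs_cast, inv_mul_le_iff₀ (by exact_mod_cast hN)]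
  exact hsum

variable [DecidableEq κ]

def permBlock (i : κ) (σ : Equiv.Perm ℕ) (x : κ → ℕ → α) : κ → ℕ → α :=
  Function.update x i (x i ∘ σ)

def IsBlockExchangeable [MeasurableSpace α] (P : Measure (κ → ℕ → α))
    (n : κ → ℕ) : Prop :=
  ∀ i σ, (∀ j, n i ≤ j → σ j = j) → P.map (permBlock i σ) = P

theorem measurable_permBlock [MeasurableSpace α] (i : κ) (σ : Equiv.Perm ℕ) :
    Measurable (permBlock (α := α) i σ) :=
  measurable_update' (a := i) |>.comp (measurable_id.prodMk
    (measurable_pi_lambda _ fun j => (measurable_pi_apply (σ j)).comp (measurable_pi_apply i)))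

theorem permBlock_apply_of_fixed {i i' : κ} {σ : Equiv.Perm ℕ} {j : ℕ}
    (h : i' = i → σ j = j) (x : κ → ℕ → α) : permBlock i σ x i' j = x i' j := by
  by_cases hi : i' = i
  · subst hi
    simp [permBlock, h rfl]
  · simp [permBlock, Function.update_of_ne hi]

theorem blockMean_permBlock {N : ℕ} {i i' : κ} {σ : Equiv.Perm ℕ}
    (h : i' = i → ∀ j, N ≤ j → σ j = j) (φ : α → ℝ) (x : κ → ℕ → α) :
    blockMean N i' φ (permBlock i σ x) = blockMean N i' φ x := by
  by_cases hi : i' = i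
  · subst hi
    have hsupp : {j | σ j ≠ j} ⊆ Finset.range N := fun j hj =>
      Finset.mem_range.2 (not_le.1 fun hNj => hj (h rfl j hNj))
    simp only [blockMean, permBlock, Function.update_self, Function.comp_apply]
    rw [Equiv.Perm.sum_comp σ _ (fun l => φ (x i' l)) hsupp]
  · simp [blockMean, permBlock, Function.update_of_ne hi]

theorem integral_comp_permBlock [MeasurableSpace α] {P : Measure (κ → ℕ → α)}
    {i : κ} {σ : Equiv.Perm ℕ} (hP : P.map (permBlock i σ) = P) {g : (κ → ℕ → α) → ℝ}
    (hg : AEStronglyMeasurable g P) : ∫ x, g (permBlock i σ x) ∂P = ∫ x, g x ∂P := by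
  conv_rhs => rw [← hP]
  rw [integral_map (measurable_permBlock i σ).aemeasurable (by rwa [hP])]

theorem abs_integral_blockMean_mul_sub_le [MeasurableSpace α]
    {P : Measure (κ → ℕ → α)} [IsProbabilityMeasure P] {i : κ} {N m b : ℕ}
    (hP : ∀ σ : Equiv.Perm ℕ, (∀ j, N ≤ j → σ j = j) → P.map (permBlock i σ) = P)
    {φ : α → ℝ} (hφ : Measurable φ) {C : ℝ} (hφC : ∀ a, |φ a| ≤ C)
    {B : (κ → ℕ → α) → ℝ} (hB : Measurable B) {D : ℝ} (hBD : ∀ x, |B x| ≤ D)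
    (hb : b < m) (hmN : m ≤ N)
    (hBσ : ∀ l, m ≤ l → l < N → ∀ x, B (permBlock i (Equiv.swap b l) x) = B x) :
    |∫ x, blockMean N i φ x * B x ∂P - ∫ x, φ (x i b) * B x ∂P|
      ≤ m / N * (2 * (C * D)) := by
  set I : ℕ → ℝ := fun l => ∫ x, φ (x i l) * B x ∂P
  have hmeas : ∀ l, Measurable fun x : κ → ℕ → α => φ (x i l) * B x := fun l =>
    (hφ.comp ((measurable_pi_apply l).comp (measurable_pi_apply i))).mul hB
  have hbound : ∀ l x, ‖φ (x i l) * B x‖ ≤ C * D := fun l x => by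
    rw [Real.norm_eq_abs, abs_mul]
    exact mul_le_mul (hφC _) (hBD x) (abs_nonneg _) ((abs_nonneg _).trans (hφC (x i l)))
  have hint : ∀ l, Integrable (fun x => φ (x i l) * B x) P := fun l =>
    Integrable.of_bound (hmeas l).aestronglyMeasurable (C * D) (ae_of_all _ (hbound l))
  have hI : ∀ l, |I l| ≤ C * D := fun l => by
    simpa using norm_integral_le_of_norm_le_const (μ := P) (ae_of_all _ (hbound l))
  have hmean :
      ∫ x, blockMean N i φ x * B x ∂P = (N : ℝ)⁻¹ * ∑ l ∈ Finset.range N, I l := by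
    simp_rw [blockMean, mul_assoc, Finset.sum_mul]
    rw [integral_const_mul, integral_finsetSum _ fun l _ => hint l]
  -- exchangeability: swapping `b` and `l` fixes `B` and moves `x i l` to position `b`
  have hswap : ∀ l, m ≤ l → l < N → I l = I b := by
    intro l hml hlN
    have hσ : ∀ j, N ≤ j → Equiv.swap b l j = j := fun j hj =>
      Equiv.swap_apply_of_ne_of_ne (by omega) (by omega)
    set τ := permBlock (α := α) i (Equiv.swap b l)
    calc I l = ∫ x, φ (τ x i b) * B (τ x) ∂P := by
          simp only [I, τ, hBσ l hml hlN]
          simp [permBlock]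
      _ = I b := integral_comp_permBlock (hP _ hσ) (hmeas b).aestronglyMeasurable
  have hN : (N : ℝ) ≠ 0 := by exact_mod_cast (hb.trans_le hmN).ne_bot
  have hdiff : ∫ x, blockMean N i φ x * B x ∂P - I b
      = (N : ℝ)⁻¹ * ∑ l ∈ Finset.range m, (I l - I b) := by
    rw [Finset.sum_subset (Finset.range_subset_range.2 hmN) fun l hlN hlm =>
      sub_eq_zero.2 (hswap l (by simpa using hlm) (by simpa using hlN)),
      hmean, Finset.sum_sub_distrib, Finset.sum_const, Finset.card_range, nsmul_eq_mul]
    field_simp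
  have hterm : ∀ l ∈ Finset.range m, |I l - I b| ≤ 2 * (C * D) := fun l _ => by
    linarith [abs_sub (I l) (I b), hI l, hI b]
  rw [hdiff, abs_mul, abs_inv, Nat.abs_cast, div_eq_inv_mul, mul_assoc]
  gcongr
  simpa using (Finset.abs_sum_le_sum_abs _ _).trans (Finset.sum_le_card_nsmul _ _ _ hterm)

/-- `∏ p ∈ S, hybridFactor n f s p` interpolates between `∏ p ∈ S, f p (x p.1 p.2)` (`s = ∅`)
and the product of block means (`s = S`). -/
noncomputable def hybridFactor (n : κ → ℕ) (f : (Σ _ : κ, ℕ) → α → ℝ)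
    (s : Finset (Σ _ : κ, ℕ)) (p : Σ _ : κ, ℕ) (x : κ → ℕ → α) : ℝ :=
  if p ∈ s then blockMean (n p.1) p.1 (f p) x else f p (x p.1 p.2)

theorem measurable_hybridFactor [MeasurableSpace α]
    {f : (Σ _ : κ, ℕ) → α → ℝ} {p : Σ _ : κ, ℕ} (hf : Measurable (f p)) (n : κ → ℕ)
    (s : Finset (Σ _ : κ, ℕ)) :
    Measurable (hybridFactor n f s p) := by
  unfold hybridFactor
  split_ifs
  · exact measurable_blockMean hf _ _
  · exact hf.comp ((measurable_pi_apply p.2).comp (measurable_pi_apply p.1))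

theorem abs_hybridFactor_le {f : (Σ _ : κ, ℕ) → α → ℝ} {p : Σ _ : κ, ℕ} {C : ℝ}
    (hC : 0 ≤ C) (hfC : ∀ a, |f p a| ≤ C) (n : κ → ℕ) (s : Finset (Σ _ : κ, ℕ)) (x : κ → ℕ → α) :
    |hybridFactor n f s p x| ≤ C := by
  unfold hybridFactor
  split_ifs
  · exact abs_blockMean_le hC hfC _ _ _
  · exact hfC _

theorem hybridFactor_permBlock_swap {n : κ → ℕ} {p q : Σ _ : κ, ℕ} (hpq : p ≠ q)
    {l : ℕ} (hpl : p.1 = q.1 → p.2 ≠ l) (hq : q.2 < n q.1) (hl : l < n q.1)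
    (f : (Σ _ : κ, ℕ) → α → ℝ) (s : Finset (Σ _ : κ, ℕ)) (x : κ → ℕ → α) :
    hybridFactor n f s p (permBlock q.1 (Equiv.swap q.2 l) x) = hybridFactor n f s p x := by
  unfold hybridFactor
  split_ifs
  · refine blockMean_permBlock (fun hi j hj => Equiv.swap_apply_of_ne_of_ne ?_ ?_) _ _ <;>
      rw [hi] at hj <;> omega
  · refine congrArg (f p) (permBlock_apply_of_fixed (fun h => ?_) x)
    exact Equiv.swap_apply_of_ne_of_ne (fun h2 => hpq (Sigma.ext h (heq_of_eq h2))) (hpl h)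

theorem abs_integral_prod_hybridFactor_sub_le [MeasurableSpace α]
    {P : Measure (κ → ℕ → α)} [IsProbabilityMeasure P] {n m : κ → ℕ} (hP : IsBlockExchangeable P n)
    (hmn : ∀ i, m i ≤ n i) {S : Finset (Σ _ : κ, ℕ)} (hS : ∀ p ∈ S, p.2 < m p.1)
    {f : (Σ _ : κ, ℕ) → α → ℝ} (hf : ∀ p ∈ S, Measurable (f p)) {C : ℝ} (hC : 0 ≤ C)
    (hfC : ∀ p ∈ S, ∀ a, |f p a| ≤ C) {s : Finset (Σ _ : κ, ℕ)} (hs : s ⊆ S) :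
    |∫ x, ∏ p ∈ S, hybridFactor n f s p x ∂P - ∫ x, ∏ p ∈ S, f p (x p.1 p.2) ∂P|
      ≤ ∑ q ∈ s, (m q.1 : ℝ) / n q.1 * (2 * C ^ S.card) := by
  induction s using Finset.induction_on with
  | empty => simp [hybridFactor]
  | insert q s hqs ih =>
    obtain ⟨hqS, hs⟩ := Finset.insert_subset_iff.1 hs
    set B : (κ → ℕ → α) → ℝ := fun x => ∏ p ∈ S.erase q, hybridFactor n f s p x
    have hB : Measurable B := Finset.measurable_prod _ fun p hp =>
      measurable_hybridFactor (hf p (Finset.mem_of_mem_erase hp)) n s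
    have hBC : ∀ x, |B x| ≤ C ^ (S.erase q).card := fun x =>
      Finset.abs_prod_le_pow_card _ _ fun p hp =>
        abs_hybridFactor_le hC (hfC p (Finset.mem_of_mem_erase hp)) n s x
    have hBσ :
        ∀ l, m q.1 ≤ l → l < n q.1 → ∀ x, B (permBlock q.1 (Equiv.swap q.2 l) x) = B x :=
      fun l hml hln x => Finset.prod_congr rfl fun p hp => by
        obtain ⟨hpq, hpS⟩ := Finset.mem_erase.1 hp
        refine hybridFactor_permBlock_swap hpq (fun h => ?_) ((hS q hqS).trans_le (hmn q.1)) hln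
          f s x
        have := hS p hpS
        rw [h] at this
        omega
    have hnew : ∀ x, ∏ p ∈ S, hybridFactor n f (insert q s) p x
        = blockMean (n q.1) q.1 (f q) x * B x := fun x => by
      rw [← Finset.mul_prod_erase S _ hqS]
      refine congrArg₂ _ (by simp [hybridFactor]) (Finset.prod_congr rfl fun p hp => ?_)
      simp [hybridFactor, Finset.ne_of_mem_erase hp]
    have hold : ∀ x, ∏ p ∈ S, hybridFactor n f s p x = f q (x q.1 q.2) * B x := fun x => by
      rw [← Finset.mul_prod_erase S _ hqS]
      simp [hybridFactor, hqs, B]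
    have hstep := abs_integral_blockMean_mul_sub_le (hP q.1) (hf q hqS) (hfC q hqS) hB hBC
      (hS q hqS) (hmn q.1) hBσ
    rw [← pow_succ', Finset.card_erase_add_one hqS] at hstep
    simp_rw [← hnew, ← hold] at hstep
    rw [Finset.sum_insert hqs]
    exact (abs_sub_le _ _ _).trans (add_le_add hstep (ih hs))

theorem tendsto_integral_prod_blockMean_sub_integral_prod [MeasurableSpace α]
    {P : (κ → ℕ) → Measure (κ → ℕ → α)} [∀ n, IsProbabilityMeasure (P n)]
    (hP : ∀ n, IsBlockExchangeable (P n) n) {m : κ → ℕ} {S : Finset (Σ _ : κ, ℕ)}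
    (hS : ∀ p ∈ S, p.2 < m p.1) {f : (Σ _ : κ, ℕ) → α → ℝ} (hf : ∀ p ∈ S, Measurable (f p))
    {C : ℝ} (hC : 0 ≤ C) (hfC : ∀ p ∈ S, ∀ a, |f p a| ≤ C) :
    Tendsto (fun n => ∫ x, ∏ p ∈ S, blockMean (n p.1) p.1 (f p) x ∂P n
      - ∫ x, ∏ p ∈ S, f p (x p.1 p.2) ∂P n) atTop (𝓝 0) := by
  have hbound : Tendsto (fun n : κ → ℕ => ∑ q ∈ S, (m q.1 : ℝ) / n q.1 * (2 * C ^ S.card))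
      atTop (𝓝 0) := by
    simpa using tendsto_finsetSum S fun q _ =>
      ((tendsto_const_div_atTop_nhds_zero_nat (m q.1 : ℝ)).comp
        (tendsto_atTop_atTop_of_monotone (Function.monotone_eval q.1)
          fun b => ⟨fun _ => b, le_rfl⟩)).mul_const (2 * C ^ S.card)
  refine squeeze_zero_norm' ?_ hbound
  filter_upwards [eventually_ge_atTop m] with n hmn
  have hall :
      ∀ x, ∏ p ∈ S, hybridFactor n f S p x = ∏ p ∈ S, blockMean (n p.1) p.1 (f p) x :=
    fun x => Finset.prod_congr rfl fun p hp => if_pos hp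
  simpa only [hall, Real.norm_eq_abs] using
    abs_integral_prod_hybridFactor_sub_le (hP n) hmn hS hf hC hfC subset_rfl

end BlockExchangeable

theorem propagation_of_chaos_general (k : ℕ)
    (P : (Fin k → ℕ) → Measure (Fin k → ℕ → ℝ))
    (hP : ∀ n, IsProbabilityMeasure (P n))
    (hexch : ∀ n : Fin k → ℕ, ∀ i : Fin k, ∀ σ : Equiv.Perm ℕ,
      (∀ j, n i ≤ j → σ j = j) →
      Measure.map (fun x => Function.update x i (x i ∘ σ)) (P n) = P n)
    (μ : Fin k → (ℝ → ℝ) → ℝ)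
    (hLLN : ∀ i : Fin k, ∀ f : ℝ → ℝ, Measurable f → (∃ C, ∀ x, |f x| ≤ C) →
      ∀ ε : ℝ, 0 < ε →
      Tendsto (fun n : Fin k → ℕ =>
          P n {x | ε ≤ |(n i : ℝ)⁻¹ * ∑ j ∈ Finset.range (n i), f (x i j) - μ i f|})
        atTop (nhds 0))
    (m : Fin k → ℕ) (f : Fin k → ℕ → ℝ → ℝ)
    (hf : ∀ i, ∀ j < m i, Measurable (f i j))
    (hfb : ∀ i, ∀ j < m i, ∃ C, ∀ x, |f i j x| ≤ C) :
    Tendsto (fun n : Fin k → ℕ =>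
        ∫ x, ∏ i : Fin k, ∏ j ∈ Finset.range (m i), f i j (x i j) ∂ P n)
      atTop (nhds (∏ i : Fin k, ∏ j ∈ Finset.range (m i), μ i (f i j))) := by
  set S : Finset (Σ _ : Fin k, ℕ) := Finset.univ.sigma fun i => Finset.range (m i)
  set F : (Σ _ : Fin k, ℕ) → ℝ → ℝ := fun p => f p.1 p.2
  have hS : ∀ p ∈ S, p.2 < m p.1 := by simp [S]
  have hF : ∀ p ∈ S, Measurable (F p) := fun p hp => hf _ _ (hS p hp)
  obtain ⟨C, hC0, hC⟩ : ∃ C, 0 ≤ C ∧ ∀ p ∈ S, ∀ a, |F p a| ≤ C :=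
    ((eventually_ge_atTop 0).and (eventually_all_finset S |>.2 fun p hp =>
      let ⟨C, hC⟩ := hfb _ _ (hS p hp)
      (eventually_ge_atTop C).mono fun _ hC' a => (hC a).trans hC')).exists
  have hmeans : Tendsto (fun n => ∫ x, ∏ p ∈ S, blockMean (n p.1) p.1 (F p) x ∂P n) atTop
      (𝓝 (∏ p ∈ S, μ p.1 (F p))) := tendsto_integral_prod_of_tendsto_measure S
    (fun p hp n => measurable_blockMean (hF p hp) (n p.1) p.1)
    (fun p hp n => abs_blockMean_le hC0 (hC p hp) (n p.1) p.1)
    fun p hp => hLLN p.1 (F p) (hF p hp) (hfb _ _ (hS p hp))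
  have hgap := tendsto_integral_prod_blockMean_sub_integral_prod (P := P) hexch hS hF hC0 hC
  have hlhs : ∀ x : Fin k → ℕ → ℝ,
      ∏ i, ∏ j ∈ Finset.range (m i), f i j (x i j) = ∏ p ∈ S, F p (x p.1 p.2) :=
    fun x => (Finset.prod_sigma _ _ fun p => F p (x p.1 p.2)).symm
  have hrhs : ∏ i, ∏ j ∈ Finset.range (m i), μ i (f i j) = ∏ p ∈ S, μ p.1 (F p) :=
    (Finset.prod_sigma _ _ fun p => μ p.1 (F p)).symm
  simp only [hlhs, hrhs]
  simpa only [sub_sub_cancel, sub_zero] using hmeans.sub hgap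

/-- Propagation of chaos for `k` blocks of exchangeable random variables.  `P n` is the
joint law of `(ξ_j^i)_{j < n i, i < k}`, realized on `Fin k → ℕ → ℝ` (coordinates `x i j`
with `j ≥ n i` irrelevant), invariant under permutations within each block.  If each block
satisfies the law of large numbers with limit functional `μ i`, then expectations of
products factorize in the limit as all `n i → ∞`. -/
theorem propagation_of_chaos (k : ℕ) (hk : 1 ≤ k)
    (P : (Fin k → ℕ) → Measure (Fin k → ℕ → ℝ))
    (hP : ∀ n, IsProbabilityMeasure (P n))
    (hexch : ∀ n : Fin k → ℕ, ∀ i : Fin k, ∀ σ : Equiv.Perm ℕ,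
      (∀ j, n i ≤ j → σ j = j) →
      Measure.map (fun x => Function.update x i (x i ∘ σ)) (P n) = P n)
    (μ : Fin k → (ℝ → ℝ) → ℝ)
    (hLLN : ∀ i : Fin k, ∀ f : ℝ → ℝ, Measurable f → (∃ C, ∀ x, |f x| ≤ C) →
      ∀ ε : ℝ, 0 < ε →
      Tendsto (fun n : Fin k → ℕ =>
          P n {x | ε ≤ |(n i : ℝ)⁻¹ * ∑ j ∈ Finset.range (n i), f (x i j) - μ i f|})
        atTop (nhds 0))
    (m : Fin k → ℕ) (f : Fin k → ℕ → ℝ → ℝ)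
    (hf : ∀ i, ∀ j < m i, Measurable (f i j))
    (hfb : ∀ i, ∀ j < m i, ∃ C, ∀ x, |f i j x| ≤ C) :
    Tendsto (fun n : Fin k → ℕ =>
        ∫ x, ∏ i : Fin k, ∏ j ∈ Finset.range (m i), f i j (x i j) ∂ P n)
      atTop (nhds (∏ i : Fin k, ∏ j ∈ Finset.range (m i), μ i (f i j))) :=
  propagation_of_chaos_general k P hP hexch μ hLLN m f hf hfb
end
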